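/- Let q be a prime power, v ≥ 2, and 1 ≤ t ≤ q − 1. Every (t mod q)-arc K in PG(v−1,q) satisfies #K ≥ [v−1]_q · t, where [k]_q = (q^k − 1)/(q − 1). -/

import Mathlib

open Module

/-- The set of subspaces of the vector space `F^v` of (algebraic) dimension `k`;
for `k = 1` these are the points of `PG(v-1, q)`, for `k = 2` the lines, and
for `k = v - 1` the hyperplanes. -/
abbrev PSub (F : Type*) [Field F] (v k : ℕ) :=
  {S : Submodule F (Fin v → F) // Module.finrank F S = k}

/-- The multiplicity `K(S)` of a subspace `S` with respect to the arc `K`. -/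
noncomputable def pmult {F : Type*} [Field F] {v : ℕ}
    (K : PSub F v 1 → ℕ) (S : Submodule F (Fin v → F)) : ℕ :=
  ∑ᶠ (P : PSub F v 1) (_ : P.1 ≤ S), K P

/-- The cardinality `#K` of the arc `K`. -/
noncomputable def pcard {F : Type*} [Field F] {v : ℕ} (K : PSub F v 1 → ℕ) : ℕ :=
  ∑ᶠ P : PSub F v 1, K P

/-!
Lines meet the arc in at least `t` points, counted with multiplicity, since `K(L) ≡ t` and
`t < q`. If some point `P₀` has `K(P₀) = 0`, the `[v-1]_q` lines through `P₀` partition the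
remaining points, so `#K ≥ [v-1]_q t`. Otherwise every point has weight at least one and
`#K ≥ [v]_q ≥ q [v-1]_q ≥ [v-1]_q t`.
-/

open Finset

namespace Submodule

variable {F V : Type*} [Field F] [AddCommGroup V] [Module F V]

lemma finrank_map_mkQ_add_finrank [FiniteDimensional F V] {P L : Submodule F V} (h : P ≤ L) :
    finrank F (L.map P.mkQ) + finrank F P = finrank F L := by
  have h2 := LinearMap.finrank_range_add_finrank_ker (P.mkQ.comp L.subtype)
  rw [LinearMap.range_comp, range_subtype, LinearMap.ker_comp, ker_mkQ] at h2
  rw [← h2, (comapSubtypeEquivOfLe h).finrank_eq]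

noncomputable def aboveEquivQuotient [FiniteDimensional F V] (P : Submodule F V) (k : ℕ) :
    {L : Submodule F V // P ≤ L ∧ finrank F L = finrank F P + k} ≃
      {Q : Submodule F (V ⧸ P) // finrank F Q = k} where
  toFun L := ⟨L.1.map P.mkQ, by have := finrank_map_mkQ_add_finrank L.2.1; omega⟩
  invFun Q := ⟨Q.1.comap P.mkQ, le_comap_mkQ P Q.1, by
    have := finrank_map_mkQ_add_finrank (le_comap_mkQ P Q.1)
    rw [map_comap_eq_of_surjective P.mkQ_surjective, Q.2] at this
    omega⟩
  left_inv L := Subtype.ext <| (comap_map_mkQ P L.1).trans (sup_eq_right.2 L.2.1)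
  right_inv Q := Subtype.ext <| map_comap_eq_of_surjective P.mkQ_surjective Q.1

lemma card_finrank_eq_one [Finite F] {n : ℕ} (hV : finrank F V = n) :
    Nat.card {P : Submodule F V // finrank F P = 1} = ∑ i ∈ range n, Nat.card F ^ i := by
  rw [← Nat.card_congr (Projectivization.equivSubmodule F V),
    Projectivization.card_of_finrank F V hV]

lemma card_lines_through [Finite F] [FiniteDimensional F V] {P : Submodule F V}
    (hP : finrank F P = 1) {n : ℕ} (hV : finrank F V = n) :
    Nat.card {L : Submodule F V // finrank F L = 2 ∧ P ≤ L} =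
      ∑ i ∈ range (n - 1), Nat.card F ^ i := by
  have e : {L : Submodule F V // finrank F L = 2 ∧ P ≤ L} ≃
      {L : Submodule F V // P ≤ L ∧ finrank F L = finrank F P + 1} :=
    Equiv.subtypeEquivRight fun L => by rw [hP]; exact and_comm
  rw [Nat.card_congr (e.trans (aboveEquivQuotient P 1)), card_finrank_eq_one
    (by rw [finrank_quotient, hV, hP])]

variable [FiniteDimensional F V] {P Q L : Submodule F V}

lemma finrank_sup_eq_two (hP : finrank F P = 1) (hQ : finrank F Q = 1) (hPQ : P ≠ Q) :
    finrank F ↥(P ⊔ Q) = 2 := by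
  have hinf : finrank F ↥(P ⊓ Q) ≠ 1 := fun h =>
    hPQ <| (eq_of_le_of_finrank_eq inf_le_left (h.trans hP.symm)).symm.trans
      (eq_of_le_of_finrank_eq inf_le_right (h.trans hQ.symm))
  have hle : finrank F ↥(P ⊓ Q) ≤ 1 := hP ▸ finrank_mono inf_le_left
  have := finrank_sup_add_finrank_inf_eq P Q
  omega

lemma eq_sup_of_finrank_eq_two (hP : finrank F P = 1) (hQ : finrank F Q = 1) (hPQ : P ≠ Q)
    (hL : finrank F L = 2) (hPL : P ≤ L) (hQL : Q ≤ L) : L = P ⊔ Q :=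
  (eq_of_le_of_finrank_eq (sup_le hPL hQL) (by rw [hL, finrank_sup_eq_two hP hQ hPQ])).symm

end Submodule

lemma le_of_modEq_of_lt {a t q : ℕ} (h : a ≡ t [MOD q]) (ht : t < q) : t ≤ a :=
  calc t = a % q := by rw [h, Nat.mod_eq_of_lt ht]
    _ ≤ a := Nat.mod_le a q

lemma geom_sum_mul_le_geom_sum_succ {q t : ℕ} (ht : t ≤ q) (n : ℕ) :
    (∑ i ∈ range n, q ^ i) * t ≤ ∑ i ∈ range (n + 1), q ^ i :=
  calc (∑ i ∈ range n, q ^ i) * t ≤ (∑ i ∈ range n, q ^ i) * q := Nat.mul_le_mul_left _ ht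
    _ = ∑ i ∈ range n, q ^ (i + 1) := by simp only [sum_mul, pow_succ]
    _ ≤ ∑ i ∈ range (n + 1), q ^ i := by rw [sum_range_succ']; exact Nat.le_add_right _ _

section Arc

variable {F : Type*} [Field F] {v : ℕ} [Fintype (PSub F v 1)]

lemma pcard_eq_sum (K : PSub F v 1 → ℕ) : pcard K = ∑ P, K P :=
  finsum_eq_sum_of_fintype _

open Classical in
lemma pmult_eq_sum (K : PSub F v 1 → ℕ) (S : Submodule F (Fin v → F)) :
    pmult K S = ∑ P, if P.1 ≤ S then K P else 0 := by
  rw [pmult, finsum_eq_sum_of_fintype]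
  exact sum_congr rfl fun P _ => finsum_eq_if

lemma card_le_pcard {K : PSub F v 1 → ℕ} (hK : ∀ P, K P ≠ 0) :
    Fintype.card (PSub F v 1) ≤ pcard K := by
  rw [pcard_eq_sum, Fintype.card_eq_sum_ones]
  exact sum_le_sum fun P _ => Nat.one_le_iff_ne_zero.2 (hK P)

lemma sum_pmult_lines_through {K : PSub F v 1 → ℕ} {P₀ : PSub F v 1} (hP₀ : K P₀ = 0)
    [Fintype {L : Submodule F (Fin v → F) // finrank F L = 2 ∧ P₀.1 ≤ L}] :
    ∑ L : {L : Submodule F (Fin v → F) // finrank F L = 2 ∧ P₀.1 ≤ L}, pmult K L.1 =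
      pcard K := by
  classical
  simp only [pmult_eq_sum]
  rw [sum_comm, pcard_eq_sum]
  refine sum_congr rfl fun Q _ => ?_
  by_cases hQ : Q = P₀
  · simp [hQ, hP₀]
  have hne : P₀.1 ≠ Q.1 := fun h => hQ (Subtype.ext h).symm
  let L₀ : {L : Submodule F (Fin v → F) // finrank F L = 2 ∧ P₀.1 ≤ L} :=
    ⟨P₀.1 ⊔ Q.1, Submodule.finrank_sup_eq_two P₀.2 Q.2 hne, le_sup_left⟩
  rw [Fintype.sum_eq_single L₀ fun L hL => if_neg fun hQL => hL <| Subtype.ext <|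
    Submodule.eq_sup_of_finrank_eq_two P₀.2 Q.2 hne L.2.1 L.2.2 hQL]
  exact if_pos le_sup_right

end Arc

theorem stmt8_general {F : Type*} [Field F] [Fintype F] (q : ℕ) (hq : Fintype.card F = q)
    {v : ℕ} (hv : 2 ≤ v) (t : ℕ) (ht2 : t ≤ q - 1)
    (K : PSub F v 1 → ℕ)
    (hK : ∀ L : PSub F v 2, pmult K L.1 ≡ t [MOD q]) :
    (q ^ (v - 1) - 1) / (q - 1) * t ≤ pcard K := by
  classical
  have hq2 : 2 ≤ q := hq ▸ Fintype.one_lt_card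
  have hdim := finrank_fin_fun F (n := v)
  have := Fintype.ofFinite (PSub F v 1)
  rw [← Nat.geomSum_eq hq2]
  by_cases hzero : ∃ P₀, K P₀ = 0
  · obtain ⟨P₀, hP₀⟩ := hzero
    have := Fintype.ofFinite {L : Submodule F (Fin v → F) // finrank F L = 2 ∧ P₀.1 ≤ L}
    have hcard := Submodule.card_lines_through P₀.2 hdim
    rw [Nat.card_eq_fintype_card, Nat.card_eq_fintype_card, hq] at hcard
    rw [← hcard, ← sum_pmult_lines_through hP₀, ← smul_eq_mul, ← card_univ]
    exact card_nsmul_le_sum _ _ _ fun L _ =>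
      le_of_modEq_of_lt (hK ⟨L.1, L.2.1⟩) (by omega)
  · push Not at hzero
    have hcard := Submodule.card_finrank_eq_one (F := F) hdim
    rw [Nat.card_eq_fintype_card, Nat.card_eq_fintype_card, hq] at hcard
    calc (∑ i ∈ range (v - 1), q ^ i) * t ≤ ∑ i ∈ range (v - 1 + 1), q ^ i :=
          geom_sum_mul_le_geom_sum_succ (by omega) _
      _ = Fintype.card (PSub F v 1) := by rw [Nat.sub_add_cancel (by omega), hcard]
      _ ≤ pcard K := card_le_pcard hzero

/-- Every `(t mod q)`-arc `K` in `PG(v-1,q)`, `v ≥ 2`, `1 ≤ t ≤ q - 1`,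
satisfies `#K ≥ [v-1]_q * t`, where `[k]_q = (q^k - 1)/(q - 1)`. -/
theorem stmt8 {F : Type*} [Field F] [Fintype F] (q : ℕ) (hq : Fintype.card F = q)
    {v : ℕ} (hv : 2 ≤ v) (t : ℕ) (ht1 : 1 ≤ t) (ht2 : t ≤ q - 1)
    (K : PSub F v 1 → ℕ)
    (hK : ∀ L : PSub F v 2, pmult K L.1 ≡ t [MOD q]) :
    (q ^ (v - 1) - 1) / (q - 1) * t ≤ pcard K :=
  stmt8_general q hq hv t ht2 K hK
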